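/- Assume every hospital's preference is substitutable. Fix a doctor d and a preference P_d, assume the set {x ∈ 𝐗_d : {x} ≻_{x_H} ∅ and {x} P_d ∅} is nonempty, and let x̄ be its P_d-maximum. Let P̃_{−d} be the profile in which every doctor i ≠ d ranks ∅ above every contract. Then the doctor-optimal rule gives φ̄_d(P_d, P̃_{−d}) = {x̄}; in particular {x̄} ∈ O^{φ̄}(P_d). -/

import Mathlib

set_option linter.unusedSectionVars false

namespace Matching

open Finset

/-- A many-to-one matching market with contracts: each contract `x` involves exactly one
doctor `xD x` and one hospital `xH x`; each hospital `h` has a fixed antisymmetric,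
transitive and complete preference `prH h`, modelled as a linear order on sets of
contracts (only its comparisons between allocations of contracts involving `h` matter). -/
structure Market (D H X : Type*) where
  xD : X → D
  xH : X → H
  prH : H → LinearOrder (Finset X)

/-- A doctor's preference: an antisymmetric, transitive and complete preference, modelled
as a linear order on sets of contracts (only comparisons between `∅` and singletons of
contracts involving the doctor matter). -/
abbrev Pref (X : Type*) := LinearOrder (Finset X)

/-- A profile of doctors' preferences. -/
abbrev Profile (D X : Type*) := D → Pref X

variable {D H X : Type*}
variable [DecidableEq D] [DecidableEq H] [DecidableEq X] [Fintype D] [Fintype H] [Fintype X]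

/-- `Y_d` : the contracts in `Y` involving doctor `d`. -/
def docPart (M : Market D H X) (Y : Finset X) (d : D) : Finset X :=
  Y.filter fun x => M.xD x = d

/-- `Y_h` : the contracts in `Y` involving hospital `h`. -/
def hospPart (M : Market D H X) (Y : Finset X) (h : H) : Finset X :=
  Y.filter fun x => M.xH x = h

/-- An allocation: distinct contracts involve distinct doctors. -/
def IsAllocation (M : Market D H X) (Z : Finset X) : Prop :=
  ∀ x ∈ Z, ∀ y ∈ Z, M.xD x = M.xD y → x = y

/-- `A(Y)` : the allocations contained in `Y`. -/
def allocs (M : Market D H X) (Y : Finset X) : Finset (Finset X) :=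
  Y.powerset.filter fun Z => ∀ x ∈ Z, ∀ y ∈ Z, M.xD x = M.xD y → x = y

lemma empty_mem_allocs (M : Market D H X) (Y : Finset X) : ∅ ∈ allocs M Y := by
  simp [allocs]

/-- The best allocation contained in `Y` according to the linear order `pr`. -/
def bestAlloc (M : Market D H X) (pr : Pref X) (Y : Finset X) : Finset X :=
  @Finset.max' _ pr (allocs M Y) ⟨∅, empty_mem_allocs M Y⟩

/-- `C_h(Y)` : hospital `h`'s choice set from `Y` (the `≻_h`-maximum of `A(Y_h)`). -/
def Ch (M : Market D H X) (h : H) (Y : Finset X) : Finset X :=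
  bestAlloc M (M.prH h) (hospPart M Y h)

/-- `C_d(P_d, Y)` : doctor `d`'s choice set from `Y` (the `P_d`-maximum of `A(Y_d)`). -/
def Cd (M : Market D H X) (Pd : Pref X) (d : D) (Y : Finset X) : Finset X :=
  bestAlloc M Pd (docPart M Y d)

/-- `C_H(Y) = ∪_{h ∈ H} C_h(Y)`. -/
def CH (M : Market D H X) (Y : Finset X) : Finset X :=
  univ.biUnion fun h => Ch M h Y

/-- `C_D(Y) = ∪_{d ∈ D} C_d(Y)`. -/
def CD (M : Market D H X) (P : Profile D X) (Y : Finset X) : Finset X :=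
  univ.biUnion fun d => Cd M (P d) d Y

/-- Substitutability of hospital `h`'s preference: `x ∈ C_h(W)` and `x ∈ Y_h ⊆ W_h`
imply `x ∈ C_h(Y)`. -/
def Substitutable (M : Market D H X) (h : H) : Prop :=
  ∀ W Y : Finset X, hospPart M Y h ⊆ hospPart M W h →
    ∀ x ∈ hospPart M Y h, x ∈ Ch M h W → x ∈ Ch M h Y

/-- The sets `X^t` of still-available contracts in the doctor-proposing deferred
acceptance algorithm (0-based: index `t` corresponds to iteration `t+1`). -/
def DDAsets (M : Market D H X) (P : Profile D X) : ℕ → Finset X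
  | 0 => univ
  | t + 1 =>
      DDAsets M P t \ (CD M P (DDAsets M P t) \ CH M (CD M P (DDAsets M P t)))

/-- `O^t` : the offers made by the doctors at iteration `t` of D-DA (0-based). -/
def offers (M : Market D H X) (P : Profile D X) (t : ℕ) : Finset X :=
  CD M P (DDAsets M P t)

/-- `O_A^t = ∪_{k ≤ t} O^k` : the accumulated offers up to iteration `t` (0-based). -/
def accOffers (M : Market D H X) (P : Profile D X) (t : ℕ) : Finset X :=
  (Finset.range (t + 1)).biUnion fun k => offers M P k

/-- D-DA has stopped at iteration `t`: all offers are accepted. -/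
def DDAstopped (M : Market D H X) (P : Profile D X) (t : ℕ) : Prop :=
  CH M (offers M P t) = offers M P t

/-- The (0-based) last iteration of D-DA, i.e. `T - 1` where `T` is the number of
iterations of D-DA. -/
noncomputable def DDAlast (M : Market D H X) (P : Profile D X) : ℕ :=
  sInf {t | DDAstopped M P t}

/-- The output of D-DA (the algorithm provably stops by iteration `Fintype.card X`,
and once stopped the offer sets stay constant). -/
def DDAoutput (M : Market D H X) (P : Profile D X) : Finset X :=
  CH M (offers M P (Fintype.card X))

/-- The doctor-optimal rule `φ̄`, giving doctor `d`'s outcome `φ̄_d(P)` (an element of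
`A(𝐗_d)`, i.e. `∅` or a singleton). -/
def docOpt (M : Market D H X) (P : Profile D X) (d : D) : Finset X :=
  docPart M (DDAoutput M P) d

/-- The sets `X^t` of still-available contracts in the hospital-proposing deferred
acceptance algorithm (0-based). -/
def HDAsets (M : Market D H X) (P : Profile D X) : ℕ → Finset X
  | 0 => univ
  | t + 1 =>
      HDAsets M P t \ (CH M (HDAsets M P t) \ CD M P (CH M (HDAsets M P t)))

/-- The offers made by the hospitals at iteration `t` of H-DA (0-based). -/
def hOffers (M : Market D H X) (P : Profile D X) (t : ℕ) : Finset X :=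
  CH M (HDAsets M P t)

/-- The output of H-DA. -/
def HDAoutput (M : Market D H X) (P : Profile D X) : Finset X :=
  CD M P (hOffers M P (Fintype.card X))

/-- The hospital-optimal rule `φ̲`, giving doctor `d`'s outcome `φ̲_d(P)`. -/
def hospOpt (M : Market D H X) (P : Profile D X) (d : D) : Finset X :=
  docPart M (HDAoutput M P) d

/-- The option set `O^φ(P_d)` left open by `P_d` at the rule `φ`. -/
def optionSet (rule : Profile D X → D → Finset X) (d : D) (Pd : Pref X) :
    Set (Finset X) :=
  {S | ∃ P : Profile D X, P d = Pd ∧ S = rule P d}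

open scoped Classical in
/-- `W_d(pr, S)` : the `pr`-worst element of the (finite) set `S` of outcomes. -/
noncomputable def worstIn (pr : Pref X) (S : Set (Finset X)) : Finset X :=
  if h : S.Nonempty then
    @Finset.min' _ pr (Set.toFinite S).toFinset ((Set.Finite.toFinset_nonempty _).mpr h)
  else ∅

open scoped Classical in
/-- The `pr`-best element of the (finite) set `S` of outcomes. -/
noncomputable def bestIn (pr : Pref X) (S : Set (Finset X)) : Finset X :=
  if h : S.Nonempty then
    @Finset.max' _ pr (Set.toFinite S).toFinset ((Set.Finite.toFinset_nonempty _).mpr h)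
  else ∅

/-- `P'_d` is a manipulation of the rule at `P_d` : for some subprofile of the other
doctors, reporting `P'_d` gives a strictly `P_d`-better outcome than truth-telling. -/
def IsManip (rule : Profile D X → D → Finset X) (d : D) (Pd P'd : Pref X) : Prop :=
  ∃ P : Profile D X, P d = Pd ∧
    Pd.lt (rule P d) (rule (Function.update P d P'd) d)

/-- `P'_d` is an obvious manipulation of the rule at `P_d`. -/
def IsObviousManip (rule : Profile D X → D → Finset X) (d : D) (Pd P'd : Pref X) :
    Prop :=
  IsManip rule d Pd P'd ∧
    (Pd.lt (worstIn Pd (optionSet rule d Pd)) (worstIn Pd (optionSet rule d P'd)) ∨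
     Pd.lt (bestIn Pd (optionSet rule d Pd)) (bestIn Pd (optionSet rule d P'd)))

/-- A rule is not obviously manipulable (NOM). -/
def NOM (rule : Profile D X → D → Finset X) : Prop :=
  ∀ (d : D) (Pd P'd : Pref X), ¬ IsObviousManip rule d Pd P'd

/-- A rule is obviously manipulable (OM). -/
def OM (rule : Profile D X → D → Finset X) : Prop :=
  ∃ (d : D) (Pd P'd : Pref X), IsObviousManip rule d Pd P'd

/-- `Y` is a stable allocation at the profile `P` : it is an individually rational
allocation and admits no blocking contract. -/
def IsStable (M : Market D H X) (P : Profile D X) (Y : Finset X) : Prop :=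
  IsAllocation M Y ∧ CD M P Y = Y ∧ CH M Y = Y ∧
    ∀ x : X, x ∉ Y →
      ¬ (x ∈ Cd M (P (M.xD x)) (M.xD x) (insert x Y) ∧
         x ∈ Ch M (M.xH x) (insert x Y))

/-- `⌈kq⌉` where `k` is the number of stable allocations at `P`. -/
noncomputable def quantileIndex (M : Market D H X) (P : Profile D X) (q : ℝ) : ℕ :=
  ⌈(Set.ncard {Y : Finset X | IsStable M P Y} : ℝ) * q⌉₊

/-- `Z` is doctor `d`'s `⌈kq⌉`-th best outcome (according to `P d`) among the `k` stable
allocations at `P` : it is the outcome of some stable allocation, strictly fewer than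
`⌈kq⌉` stable allocations give `d` a strictly better outcome, and at least `⌈kq⌉` stable
allocations give `d` a weakly better outcome. -/
def IsQuantileOutcome (M : Market D H X) (P : Profile D X) (q : ℝ) (d : D)
    (Z : Finset X) : Prop :=
  (∃ Y : Finset X, IsStable M P Y ∧ docPart M Y d = Z) ∧
    Set.ncard {Y : Finset X | IsStable M P Y ∧ (P d).lt Z (docPart M Y d)} <
      quantileIndex M P q ∧
    quantileIndex M P q ≤
      Set.ncard {Y : Finset X | IsStable M P Y ∧ (P d).le Z (docPart M Y d)}

/-! When every other doctor finds all contracts unacceptable, only `d` ever proposes, and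
D-DA reduces to `d` going down her list: each round she offers the single best contract
still available to her. Since `x̄`'s hospital accepts `x̄` when it is offered alone, `x̄` is
never removed, so every offer is weakly `P_d`-better than `x̄`. D-DA stops within `|𝐗|`
rounds because every round that does not stop removes a contract; the single offer at
the stopping round is accepted, hence acceptable to both sides, and the maximality of `x̄`
forces it to be `x̄`. -/

lemma singleton_mem_allocs {M : Market D H X} {Y : Finset X} {x : X} :
    {x} ∈ allocs M Y ↔ x ∈ Y := by
  simp [allocs]

lemma allocs_singleton (M : Market D H X) (x : X) : allocs M {x} = {∅, {x}} := by
  ext z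
  simp only [allocs, mem_filter, mem_powerset, subset_singleton_iff, mem_insert, mem_singleton]
  constructor
  · exact fun h => h.1
  · rintro (rfl | rfl) <;> simp

lemma bestAlloc_mem (M : Market D H X) (pr : Pref X) (Y : Finset X) :
    bestAlloc M pr Y ∈ allocs M Y :=
  @max'_mem _ pr _ _

lemma bestAlloc_subset (M : Market D H X) (pr : Pref X) (Y : Finset X) :
    bestAlloc M pr Y ⊆ Y :=
  mem_powerset.mp (mem_filter.mp (bestAlloc_mem M pr Y)).1

lemma le_bestAlloc {M : Market D H X} {pr : Pref X} {Y z : Finset X} (hz : z ∈ allocs M Y) :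
    pr.le z (bestAlloc M pr Y) :=
  @le_max' _ pr _ _ hz

lemma bestAlloc_eq {M : Market D H X} {pr : Pref X} {Y b : Finset X} (hb : b ∈ allocs M Y)
    (hub : ∀ z ∈ allocs M Y, pr.le z b) : bestAlloc M pr Y = b :=
  @le_antisymm _ pr.toPartialOrder _ _ (@max'_le _ pr _ _ _ hub) (le_bestAlloc hb)

lemma bestAlloc_singleton (M : Market D H X) (pr : Pref X) (x : X) :
    bestAlloc M pr {x} = if pr.lt ∅ {x} then {x} else ∅ := by
  split_ifs with hx <;> refine bestAlloc_eq (by simp [allocs_singleton]) ?_ <;>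
    simp only [allocs_singleton, mem_insert, mem_singleton, forall_eq_or_imp, forall_eq]
  · exact ⟨@le_of_lt _ pr.toPreorder _ _ hx, @le_refl _ pr.toPreorder _⟩
  · exact ⟨@le_refl _ pr.toPreorder _, @le_of_not_gt _ pr _ _ hx⟩

lemma mem_allocs_docPart {M : Market D H X} {Y : Finset X} {i : D} {z : Finset X} :
    z ∈ allocs M (docPart M Y i) ↔ z = ∅ ∨ ∃ x ∈ Y, M.xD x = i ∧ z = {x} := by
  constructor
  · intro hz
    simp only [allocs, mem_filter, mem_powerset] at hz
    obtain ⟨hzY, hzalloc⟩ := hz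
    rcases z.eq_empty_or_nonempty with hempty | ⟨a, ha⟩
    · exact Or.inl hempty
    have hdoc : ∀ b ∈ z, b ∈ Y ∧ M.xD b = i := fun b hb => mem_filter.mp (hzY hb)
    refine Or.inr ⟨a, (hdoc a ha).1, (hdoc a ha).2, ?_⟩
    refine eq_singleton_iff_unique_mem.mpr ⟨ha, ?_⟩
    exact fun b hb => hzalloc b hb a ha ((hdoc b hb).2.trans (hdoc a ha).2.symm)
  · rintro (rfl | ⟨x, hx, rfl, rfl⟩)
    · exact empty_mem_allocs M _
    · exact singleton_mem_allocs.mpr (mem_filter.mpr ⟨hx, rfl⟩)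

lemma Cd_eq_empty_of_forall_lt_empty {M : Market D H X} {pr : Pref X} {i : D}
    (h : ∀ w, M.xD w = i → pr.lt {w} ∅) (Y : Finset X) : Cd M pr i Y = ∅ := by
  refine bestAlloc_eq (empty_mem_allocs M _) fun z hz => ?_
  rcases mem_allocs_docPart.mp hz with rfl | ⟨x, -, hxi, rfl⟩
  · exact @le_refl _ pr.toPreorder _
  · exact @le_of_lt _ pr.toPreorder _ _ (h x hxi)

lemma exists_Cd_eq_singleton {M : Market D H X} {pr : Pref X} {i : D} {Y : Finset X} {x : X}
    (hx : x ∈ Y) (hxi : M.xD x = i) (hxP : pr.lt ∅ {x}) :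
    ∃ y, M.xD y = i ∧ Cd M pr i Y = {y} ∧ pr.le {x} {y} := by
  have hle : pr.le {x} (Cd M pr i Y) :=
    le_bestAlloc (mem_allocs_docPart.mpr (Or.inr ⟨x, hx, hxi, rfl⟩))
  rcases mem_allocs_docPart.mp (bestAlloc_mem M pr (docPart M Y i)) with
    hempty | ⟨y, -, hyi, hy⟩
  · rw [Cd, hempty] at hle
    exact absurd hle (@not_le_of_gt _ pr.toPreorder _ _ hxP)
  · exact ⟨y, hyi, hy, hy ▸ hle⟩

lemma CD_eq_Cd_of_forall_ne_lt_empty {M : Market D H X} {P : Profile D X} {d : D}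
    (hothers : ∀ i, i ≠ d → ∀ w, M.xD w = i → (P i).lt {w} ∅) (Y : Finset X) :
    CD M P Y = Cd M (P d) d Y := by
  ext a
  simp only [CD, mem_biUnion, mem_univ, true_and]
  refine ⟨fun ⟨i, hi⟩ => ?_, fun ha => ⟨d, ha⟩⟩
  by_cases hid : i = d
  · exact hid ▸ hi
  · simp [Cd_eq_empty_of_forall_lt_empty (hothers i hid)] at hi

lemma CH_singleton (M : Market D H X) (x : X) :
    CH M {x} = if (M.prH (M.xH x)).lt ∅ {x} then {x} else ∅ := by
  have hpart : ∀ h, hospPart M {x} h = if M.xH x = h then {x} else ∅ := fun h =>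
    filter_singleton _ _
  rw [← bestAlloc_singleton M (M.prH (M.xH x))]
  ext a
  simp only [CH, Ch, mem_biUnion, mem_univ, true_and]
  refine ⟨fun ⟨h, ha⟩ => ?_, fun ha => ⟨M.xH x, by rwa [hpart, if_pos rfl]⟩⟩
  by_cases hxh : M.xH x = h
  · subst hxh; rwa [hpart, if_pos rfl] at ha
  · rw [hpart, if_neg hxh] at ha
    exact absurd (bestAlloc_subset M _ _ ha) (notMem_empty a)

lemma CH_singleton_eq_self_iff {M : Market D H X} {x : X} :
    CH M {x} = {x} ↔ (M.prH (M.xH x)).lt ∅ {x} := by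
  rw [CH_singleton]
  split_ifs with hx <;> simp [hx]

lemma CH_subset (M : Market D H X) (Y : Finset X) : CH M Y ⊆ Y :=
  biUnion_subset.mpr fun _ _ => (bestAlloc_subset M _ _).trans (filter_subset _ _)

lemma CD_subset (M : Market D H X) (P : Profile D X) (Y : Finset X) : CD M P Y ⊆ Y :=
  biUnion_subset.mpr fun _ _ => (bestAlloc_subset M _ _).trans (filter_subset _ _)

section DeferredAcceptance

variable (M : Market D H X) (P : Profile D X)

lemma DDAsets_succ (t : ℕ) :
    DDAsets M P (t + 1) = DDAsets M P t \ (offers M P t \ CH M (offers M P t)) :=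
  rfl

lemma DDAsets_succ_eq_of_stopped {t : ℕ} (ht : DDAstopped M P t) :
    DDAsets M P (t + 1) = DDAsets M P t := by
  rw [DDAsets_succ, ht, Finset.sdiff_self, Finset.sdiff_empty]

lemma DDAsets_succ_ssubset_of_not_stopped {t : ℕ} (ht : ¬ DDAstopped M P t) :
    DDAsets M P (t + 1) ⊂ DDAsets M P t := by
  obtain ⟨x, hxO, hxCH⟩ :=
    exists_of_ssubset (Finset.ssubset_iff_subset_ne.mpr ⟨CH_subset M (offers M P t), ht⟩)
  refine (ssubset_iff_of_subset sdiff_subset).mpr ⟨x, CD_subset M P _ hxO, fun hx => ?_⟩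
  exact (mem_sdiff.mp hx).2 (mem_sdiff.mpr ⟨hxO, hxCH⟩)

lemma card_DDAsets_add_le {t : ℕ} (ht : ∀ s < t, ¬ DDAstopped M P s) :
    (DDAsets M P t).card + t ≤ Fintype.card X := by
  induction t with
  | zero => simp [DDAsets]
  | succ t ih =>
    have hlt := card_lt_card (DDAsets_succ_ssubset_of_not_stopped M P (ht t t.lt_succ_self))
    have := ih fun s hs => ht s (hs.trans t.lt_succ_self)
    omega

lemma exists_DDAstopped_le_card : ∃ s ≤ Fintype.card X, DDAstopped M P s := by
  by_contra! h
  have := card_DDAsets_add_le M P (t := Fintype.card X + 1) fun s hs =>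
    h s (Nat.lt_succ_iff.mp hs)
  omega

lemma DDAsets_eq_of_stopped {s t : ℕ} (hs : DDAstopped M P s) (hst : s ≤ t) :
    DDAsets M P t = DDAsets M P s := by
  induction t, hst using Nat.le_induction with
  | base => rfl
  | succ t _ ih =>
    have ht : DDAstopped M P t := by rwa [DDAstopped, offers, ih]
    rw [DDAsets_succ_eq_of_stopped M P ht, ih]

lemma exists_DDAoutput_eq_offers : ∃ s, DDAstopped M P s ∧ DDAoutput M P = offers M P s := by
  obtain ⟨s, hs_le, hs⟩ := exists_DDAstopped_le_card M P
  refine ⟨s, hs, ?_⟩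
  rw [DDAoutput, offers, DDAsets_eq_of_stopped M P hs hs_le]
  exact hs

lemma mem_DDAsets_of_forall_mem_CH {x : X}
    (hx : ∀ t, x ∈ DDAsets M P t → x ∈ offers M P t → x ∈ CH M (offers M P t))
    (t : ℕ) : x ∈ DDAsets M P t := by
  induction t with
  | zero => exact mem_univ x
  | succ t ih =>
    rw [DDAsets_succ, mem_sdiff, mem_sdiff, not_and_not_right]
    exact ⟨ih, hx t ih⟩

end DeferredAcceptance

theorem docOpt_top_acceptable_general (M : Market D H X)
    (d : D) (Pd : Pref X) (xb : X)
    (hxbd : M.xD xb = d)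
    (hxbH : (M.prH (M.xH xb)).lt (∅ : Finset X) {xb})
    (hxbP : Pd.lt (∅ : Finset X) {xb})
    (hmax : ∀ w : X, M.xD w = d → (M.prH (M.xH w)).lt (∅ : Finset X) {w} →
      Pd.lt (∅ : Finset X) {w} → Pd.le ({w} : Finset X) {xb})
    (P : Profile D X) (hPd : P d = Pd)
    (hothers : ∀ i : D, i ≠ d → ∀ w : X, M.xD w = i → (P i).lt ({w} : Finset X) ∅) :
    docOpt M P d = {xb} ∧ ({xb} : Finset X) ∈ optionSet (docOpt M) d Pd := by
  subst hPd
  have hoffers : ∀ t, xb ∈ DDAsets M P t →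
      ∃ y, offers M P t = {y} ∧ M.xD y = d ∧ (P d).le {xb} {y} := fun t hxb => by
    obtain ⟨y, hyd, hy, hle⟩ := exists_Cd_eq_singleton hxb hxbd hxbP
    exact ⟨y, by rw [offers, CD_eq_Cd_of_forall_ne_lt_empty hothers, hy], hyd, hle⟩
  have hxb_avail : ∀ t, xb ∈ DDAsets M P t :=
    mem_DDAsets_of_forall_mem_CH M P fun t hxb hxbO => by
      obtain ⟨y, hy, -, -⟩ := hoffers t hxb
      rw [hy, mem_singleton] at hxbO
      rw [hy, ← hxbO, CH_singleton_eq_self_iff.mpr hxbH]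
      exact mem_singleton_self xb
  obtain ⟨s, hstop, hout⟩ := exists_DDAoutput_eq_offers M P
  obtain ⟨y, hy, hyd, hle⟩ := hoffers s (hxb_avail s)
  have hyH : (M.prH (M.xH y)).lt ∅ {y} := by
    rw [DDAstopped, hy] at hstop
    exact CH_singleton_eq_self_iff.mp hstop
  have hyP : (P d).lt ∅ {y} := @lt_of_lt_of_le _ (P d).toPreorder _ _ _ hxbP hle
  have hyxb : y = xb :=
    singleton_inj.mp (@le_antisymm _ (P d).toPartialOrder _ _ (hmax y hyd hyH hyP) hle)
  have hdoc : docOpt M P d = {xb} := by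
    rw [docOpt, hout, hy, hyxb, docPart, filter_singleton, if_pos hxbd]
  exact ⟨hdoc, P, rfl, hdoc.symm⟩

/-- If `x̄` is the `P_d`-maximum of the nonempty set
`{x ∈ 𝐗_d : {x} ≻_{x_H} ∅ and {x} P_d ∅}`, and every doctor `i ≠ d` ranks `∅` above
every contract, then the doctor-optimal rule gives `φ̄_d(P_d, P̃_{-d}) = {x̄}`; in
particular `{x̄} ∈ O^{φ̄}(P_d)`. -/
theorem docOpt_top_acceptable (M : Market D H X) (hsub : ∀ h : H, Substitutable M h)
    (d : D) (Pd : Pref X) (xb : X)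
    (hxbd : M.xD xb = d)
    (hxbH : (M.prH (M.xH xb)).lt (∅ : Finset X) {xb})
    (hxbP : Pd.lt (∅ : Finset X) {xb})
    (hmax : ∀ w : X, M.xD w = d → (M.prH (M.xH w)).lt (∅ : Finset X) {w} →
      Pd.lt (∅ : Finset X) {w} → Pd.le ({w} : Finset X) {xb})
    (P : Profile D X) (hPd : P d = Pd)
    (hothers : ∀ i : D, i ≠ d → ∀ w : X, M.xD w = i → (P i).lt ({w} : Finset X) ∅) :
    docOpt M P d = {xb} ∧ ({xb} : Finset X) ∈ optionSet (docOpt M) d Pd :=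
  docOpt_top_acceptable_general M d Pd xb hxbd hxbH hxbP hmax P hPd hothers

end Matching
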